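/- The greedy schedule that repeatedly updates all blocks corresponding to current sink vertices of the dependency graph and then deletes those sinks terminates and produces a feasible update sequence whenever the dependency graph is acyclic. -/

import Mathlib

/-!
A formal model of congestion-free flow rerouting (network update scheduling).
An update flow network consists of a source `s`, a terminal `t`, edge
capacities, and `k` update flow pairs, each given by an old `s`-`t` path and
an update (new) `s`-`t` path (represented as lists of vertices) with a demand.
An update sequence assigns to every update `(v, i)` (vertex `v`, pair `i`) a
round; it is feasible if resolving all updates of earlier rounds together with
any subset of the current round always leaves, for every pair, a unique valid
(capacity-respecting) transient `s`-`t` path among the active edges, and the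
family of transient paths jointly respects the capacities.
-/

namespace FlowUpdate

variable {V : Type} [DecidableEq V] {k : ℕ}

/-- The edges of a path given as a list of vertices. -/
def edgesOf (p : List V) : List (V × V) := p.zip p.tail

/-- The subpath of `p` from vertex `a` to vertex `z` (inclusive). -/
def segment (p : List V) (a z : V) : List V :=
  ((p.dropWhile (fun v => decide (v ≠ a))).takeWhile (fun v => decide (v ≠ z))) ++ [z]

/-- The outgoing edge of `v` on the path `p`, if any. -/
def outEdge (p : List V) (v : V) : Option (V × V) :=
  (edgesOf p).find? (fun e => decide (e.1 = v))

/-- An update flow network with `k` update flow pairs. -/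
structure UFN (V : Type) (k : ℕ) where
  s : V
  t : V
  cap : V → V → ℕ
  old : Fin k → List V
  new : Fin k → List V
  demand : Fin k → ℕ

namespace UFN

/-- After resolving the set of updates `U`, edge `e` is active for pair `i` iff
it is an old edge whose tail is not yet updated, or a new edge whose tail is
updated. -/
def active (G : UFN V k) (U : Set (V × Fin k)) (i : Fin k) (e : V × V) : Prop :=
  (e ∈ edgesOf (G.old i) ∧ (e.1, i) ∉ U) ∨ (e ∈ edgesOf (G.new i) ∧ (e.1, i) ∈ U)

/-- `p` is a simple `s`-`t` path all of whose edges satisfy `E`. -/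
def IsPathIn (E : V × V → Prop) (s t : V) (p : List V) : Prop :=
  p.head? = some s ∧ p.getLast? = some t ∧ List.Chain' (fun u v => E (u, v)) p ∧ p.Nodup

/-- `p` respects the capacities for the demand of pair `i`. -/
def ValidPath (G : UFN V k) (i : Fin k) (p : List V) : Prop :=
  ∀ e ∈ edgesOf p, G.demand i ≤ G.cap e.1 e.2

/-- `T` is the unique valid transient path of pair `i` after resolving `U`. -/
def TransientPair (G : UFN V k) (U : Set (V × Fin k)) (i : Fin k) (T : List V) : Prop :=
  IsPathIn (G.active U i) G.s G.t T ∧ G.ValidPath i T ∧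
    ∀ p, IsPathIn (G.active U i) G.s G.t p → G.ValidPath i p → p = T

/-- After resolving `U`, every pair has a unique valid transient path, and the
family of transient paths jointly respects the capacities. -/
def TransientFamily (G : UFN V k) (U : Set (V × Fin k)) : Prop :=
  ∃ T : Fin k → List V,
    (∀ i, G.TransientPair U i (T i)) ∧
    (∀ u v : V, (∑ i : Fin k, if (u, v) ∈ edgesOf (T i) then G.demand i else 0) ≤ G.cap u v)

/-- An update sequence (an assignment of rounds to all updates) is feasible if
after resolving all updates of rounds `< r` together with any subset of the
updates of round `r`, all pairs admit a transient family. -/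
def Feasible (G : UFN V k) (R : V × Fin k → ℕ) : Prop :=
  ∀ r : ℕ, ∀ S : Set (V × Fin k), (∀ u ∈ S, R u = r) →
    G.TransientFamily ({u | R u < r} ∪ S)

/-- `p` is a simple path from the source to the terminal. -/
def IsStPath (G : UFN V k) (p : List V) : Prop :=
  p.head? = some G.s ∧ p.getLast? = some G.t ∧ p.Nodup

/-- Well-formedness of an update flow network: all old and new flows are simple
`s`-`t` paths, each pair forms a DAG, each new path respects capacities for its
own demand, and both the old family and the new family jointly respect the
capacities. -/
def WellFormed (G : UFN V k) : Prop :=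
  (∀ i, G.IsStPath (G.old i) ∧ G.IsStPath (G.new i)) ∧
  (∀ i, ∃ ord : V → ℕ, ∀ e ∈ edgesOf (G.old i) ++ edgesOf (G.new i), ord e.1 < ord e.2) ∧
  (∀ i, G.ValidPath i (G.new i)) ∧
  (∀ u v : V, (∑ i : Fin k, if (u, v) ∈ edgesOf (G.old i) then G.demand i else 0) ≤ G.cap u v) ∧
  (∀ u v : V, (∑ i : Fin k, if (u, v) ∈ edgesOf (G.new i) then G.demand i else 0) ≤ G.cap u v)

/-- The common vertices of the old and new path of pair `i`, in path order. -/
def commons (G : UFN V k) (i : Fin k) : List V :=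
  (G.old i).filter (fun v => decide (v ∈ G.new i))

/-- A block of pair `i` is a pair `(a, z)` of consecutive common vertices of the
old and new paths of `i`. -/
def IsBlock (G : UFN V k) (i : Fin k) (b : V × V) : Prop :=
  b ∈ edgesOf (G.commons i)

/-- A (candidate) block: a pair index together with its start and end vertices. -/
abbrev Blk (V : Type) (k : ℕ) := Fin k × V × V

def IsBlk (G : UFN V k) (b : Blk V k) : Prop := G.IsBlock b.1 b.2

/-- The old-path segment of a block. -/
def blkOldSeg (G : UFN V k) (b : Blk V k) : List V := segment (G.old b.1) b.2.1 b.2.2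

/-- The update-path segment of a block. -/
def blkNewSeg (G : UFN V k) (b : Blk V k) : List V := segment (G.new b.1) b.2.1 b.2.2

/-- Block `b1` depends on block `b2` (written `b1 → b2`) if they belong to
different pairs and some edge lies on `b1`'s update path and on `b2`'s old path
with capacity less than the sum of the two demands. -/
def Dep (G : UFN V k) (b1 b2 : Blk V k) : Prop :=
  G.IsBlk b1 ∧ G.IsBlk b2 ∧ b1.1 ≠ b2.1 ∧
  ∃ e : V × V, e ∈ edgesOf (G.blkNewSeg b1) ∧ e ∈ edgesOf (G.blkOldSeg b2) ∧
    G.cap e.1 e.2 < G.demand b1.1 + G.demand b2.1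

/-- The dependency graph contains a directed cycle. -/
def HasDepCycle (G : UFN V k) : Prop := ∃ b : Blk V k, Relation.TransGen G.Dep b b

/-- The number of rounds used by an update sequence. -/
def numRounds [Fintype V] (R : V × Fin k → ℕ) : ℕ :=
  (Finset.image R Finset.univ).card

/-- An update `(v, i)` is empty if `v`'s outgoing old edge and outgoing new edge
for pair `i` coincide (in particular if `v` has no outgoing edge for pair `i`). -/
def EmptyUpd (G : UFN V k) (u : V × Fin k) : Prop :=
  outEdge (G.old u.2) u.1 = outEdge (G.new u.2) u.1

instance (G : UFN V k) (u : V × Fin k) : Decidable (G.EmptyUpd u) :=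
  inferInstanceAs (Decidable (outEdge (G.old u.2) u.1 = outEdge (G.new u.2) u.1))

/-- `R` updates every block in (at most) 3 consecutive rounds: first all internal
update-path vertices of the block, then the start vertex, then all old-path-only
vertices of the block. -/
def BlockPattern (G : UFN V k) (R : V × Fin k → ℕ) : Prop :=
  ∀ b : Blk V k, G.IsBlk b → ∃ r : ℕ,
    (∀ v ∈ G.blkNewSeg b, v ≠ b.2.1 → v ≠ b.2.2 → R (v, b.1) = r) ∧
    R (b.2.1, b.1) = r + 1 ∧
    (∀ v ∈ G.blkOldSeg b, v ∉ G.new b.1 → R (v, b.1) = r + 2)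

/-- The size of the network (total length of the flow paths). -/
def size (G : UFN V k) : ℕ := ∑ i : Fin k, ((G.old i).length + (G.new i).length)

end UFN

end FlowUpdate

/-!
After resolving a set `U` of updates, every vertex has at most one active out-edge per pair, so
a simple active `s`-`t` path is unique if it exists.

The common vertices of the old and the update path of a pair cut both paths into blocks. Suppose
that whenever the start vertex of a block is resolved, so are all its update-only vertices, and
whenever it is not, none of its old-only vertices is; the three-round pattern guarantees this at
every moment of the schedule. Then following, block by block, the update or the old segment,
according to the state of the start vertex, gives an active `s`-`t` path, valid because each of
its edges is an old or an update edge of its pair.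

An edge on both transient paths lies either on the old paths of both pairs, or on the update paths
of both, and those configurations are congestion-free; or it lies on the update segment of a
switched block `b₁` and the old segment of an unswitched block `b₂` of the other pair. If its
capacity were below the sum of the demands, `b₁` would depend on `b₂`, so `b₂` would have been
switched before `b₁`.

Starting block `b` in round `3ρ(b) + 2`, where `ρ(b)` is the number of blocks reachable from `b`
in the acyclic dependency graph, respects all dependencies; like the greedy procedure, it updates
sinks first.
-/

namespace FlowUpdate

open List Relation

section Lists

variable {α : Type} {R : α → α → Prop} {p q : List α} {u v w : α}

@[simp]
theorem edgesOf_cons_cons (a b : α) (l : List α) :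
    edgesOf (a :: b :: l) = (a, b) :: edgesOf (b :: l) := rfl

theorem mem_edgesOf_iff : (u, v) ∈ edgesOf p ↔ ∃ l₁ l₂, p = l₁ ++ u :: v :: l₂ := by
  induction p with
  | nil => simp [edgesOf]
  | cons a q ih =>
    cases q with
    | nil => simp [edgesOf, List.cons_eq_append_iff]
    | cons b r =>
      rw [edgesOf_cons_cons, mem_cons, ih, Prod.mk.injEq]
      constructor
      · rintro (⟨rfl, rfl⟩ | ⟨l₁, l₂, h⟩)
        · exact ⟨[], r, rfl⟩
        · exact ⟨a :: l₁, l₂, by rw [h, cons_append]⟩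
      · rintro ⟨_ | ⟨x, l₁⟩, l₂, h⟩
        · simp_all
        · exact Or.inr ⟨l₁, l₂, (cons.inj h).2⟩

theorem mem_edgesOf_of_infix (h : p <:+: q) (he : (u, v) ∈ edgesOf p) : (u, v) ∈ edgesOf q := by
  obtain ⟨l₁, l₂, rfl⟩ := mem_edgesOf_iff.1 he
  obtain ⟨s, t, rfl⟩ := h
  exact mem_edgesOf_iff.2 ⟨s ++ l₁, l₂ ++ t, by simp⟩

theorem fst_mem_of_mem_edgesOf (h : (u, v) ∈ edgesOf p) : u ∈ p := by
  obtain ⟨l₁, l₂, rfl⟩ := mem_edgesOf_iff.1 h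
  simp

theorem snd_mem_of_mem_edgesOf (h : (u, v) ∈ edgesOf p) : v ∈ p := by
  obtain ⟨l₁, l₂, rfl⟩ := mem_edgesOf_iff.1 h
  simp

theorem isChain_iff_forall_mem_edgesOf :
    IsChain R p ↔ ∀ u v, (u, v) ∈ edgesOf p → R u v := by
  simp only [isChain_iff_forall_rel_of_append_cons_cons, mem_edgesOf_iff]
  grind

theorem _root_.List.Pairwise.rel_of_mem_edgesOf (hp : p.Pairwise R) (h : (u, v) ∈ edgesOf p) :
    R u v :=
  isChain_iff_forall_mem_edgesOf.1 hp.isChain u v h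

theorem edgesOf_append_cons (l : List α) (c : α) (m : List α) :
    edgesOf (l ++ c :: m) = edgesOf (l ++ [c]) ++ edgesOf (c :: m) := by
  induction l with
  | nil => simp [edgesOf]
  | cons a l ih =>
    cases l with
    | nil => cases m <;> simp [edgesOf]
    | cons b l => simpa using ih

theorem snd_eq_of_mem_edgesOf (hp : p.Nodup) (hv : (u, v) ∈ edgesOf p)
    (hw : (u, w) ∈ edgesOf p) : v = w := by
  induction p with
  | nil => simp [edgesOf] at hv
  | cons a q ih =>
    cases q with
    | nil => simp [edgesOf] at hv
    | cons b r =>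
      simp only [edgesOf_cons_cons, mem_cons, Prod.mk.injEq] at hv hw
      have ha := (nodup_cons.1 hp).1
      rcases hv with hv | hv <;> rcases hw with hw | hw
      · exact hv.2.trans hw.2.symm
      · exact absurd (hv.1 ▸ fst_mem_of_mem_edgesOf hw) ha
      · exact absurd (hw.1 ▸ fst_mem_of_mem_edgesOf hv) ha
      · exact ih (nodup_cons.1 hp).2 hv hw

theorem pairwise_of_forall_mem_edgesOf {β : Type*} [Preorder β] {f : α → β}
    (h : ∀ u v, (u, v) ∈ edgesOf p → f u < f v) : p.Pairwise (f · < f ·) :=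
  pairwise_map.1 (isChain_iff_pairwise.1 ((isChain_map f).2 (isChain_iff_forall_mem_edgesOf.2 h)))

theorem prefix_or_prefix_of_isChain (hR : ∀ u v w, R u v → R u w → v = w) {a : α} :
    ∀ {p q : List α}, IsChain R (a :: p) → IsChain R (a :: q) →
      a :: p <+: a :: q ∨ a :: q <+: a :: p
  | [], _, _, _ => Or.inl (prefix_cons_inj a |>.2 (nil_prefix))
  | _ :: _, [], _, _ => Or.inr (prefix_cons_inj a |>.2 (nil_prefix))
  | b :: p, c :: q, hp, hq => by
    obtain ⟨hab, hp⟩ := isChain_cons_cons.1 hp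
    obtain ⟨hac, hq⟩ := isChain_cons_cons.1 hq
    obtain rfl := hR a b c hab hac
    simpa only [prefix_cons_inj] using prefix_or_prefix_of_isChain hR hp hq

theorem eq_of_prefix_of_getLast?_eq {p q : List α} (h : p <+: q) (hq : q.Nodup)
    (hlast : p.getLast? = q.getLast?) (hp : p ≠ []) : p = q := by
  obtain ⟨r, rfl⟩ := h
  cases r using reverseRecOn with
  | nil => simp
  | append_singleton r x =>
    exfalso
    obtain ⟨y, hy⟩ := (getLast?_isSome (l := p)).2 hp |> Option.isSome_iff_exists.1
    rw [← append_assoc, getLast?_concat, hy] at hlast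
    cases hlast
    exact (nodup_append.1 hq).2.2 _ (mem_of_getLast? hy) _ (by simp) rfl

theorem UFN.IsPathIn.unique {E : α × α → Prop} (hE : ∀ u v w, E (u, v) → E (u, w) → v = w)
    {s t : α} {p q : List α} (hp : UFN.IsPathIn E s t p) (hq : UFN.IsPathIn E s t q) :
    p = q := by
  obtain ⟨hps, hpt, hpE, hpnd⟩ := hp
  obtain ⟨hqs, hqt, hqE, hqnd⟩ := hq
  obtain ⟨p, rfl⟩ := head?_eq_some_iff.1 hps
  obtain ⟨q, rfl⟩ := head?_eq_some_iff.1 hqs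
  rcases prefix_or_prefix_of_isChain (R := fun u v => E (u, v)) hE hpE hqE with h | h
  · exact eq_of_prefix_of_getLast?_eq h hqnd (hpt.trans hqt.symm) (cons_ne_nil _ _)
  · exact (eq_of_prefix_of_getLast?_eq h hpnd (hqt.trans hpt.symm) (cons_ne_nil _ _)).symm

end Lists

section Segments

variable {α : Type} {β : Type*} [LinearOrder β] {f : α → β}
  {P Q C : List α} {a z a' z' u v w : α}

theorem not_between_of_mem_edgesOf (hC : C.Pairwise (f · < f ·)) (hb : (a, z) ∈ edgesOf C)
    (hv : v ∈ C) : ¬ (f a < f v ∧ f v < f z) := by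
  rintro ⟨hav, hvz⟩
  obtain ⟨C₁, C₂, rfl⟩ := mem_edgesOf_iff.1 hb
  obtain ⟨hC₁, hC', hC₁a⟩ := pairwise_append.1 hC
  rcases mem_append.1 hv with hv | hv
  · exact lt_asymm hav (hC₁a v hv a mem_cons_self)
  rcases mem_cons.1 hv with rfl | hv
  · exact lt_irrefl _ hav
  rcases mem_cons.1 hv with rfl | hv
  · exact lt_irrefl _ hvz
  · exact lt_asymm hvz ((pairwise_cons.1 (pairwise_cons.1 hC').2).1 v hv)

theorem endpoints_mem_of_mem_edgesOf (hCPQ : ∀ v, v ∈ C ↔ v ∈ P ∧ v ∈ Q)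
    (hb : (a, z) ∈ edgesOf C) : a ∈ P ∧ z ∈ P :=
  ⟨((hCPQ a).1 (fst_mem_of_mem_edgesOf hb)).1, ((hCPQ z).1 (snd_mem_of_mem_edgesOf hb)).1⟩

variable [DecidableEq α]

theorem exists_segment_eq (hP : P.Pairwise (f · < f ·)) (ha : a ∈ P) (hz : z ∈ P)
    (haz : f a < f z) :
    ∃ P₁ I P₂, P = P₁ ++ a :: (I ++ z :: P₂) ∧ segment P a z = a :: (I ++ [z]) ∧
      ∀ x ∈ I, f a < f x ∧ f x < f z := by
  obtain ⟨P₁, P', rfl⟩ := append_of_mem ha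
  obtain ⟨hP₁, hP', hP₁a⟩ := pairwise_append.1 hP
  have hz' : z ∈ P' := by
    rcases mem_append.1 hz with h | h
    · exact absurd (hP₁a z h a mem_cons_self) (lt_asymm haz)
    · exact (mem_cons.1 h).resolve_left (by rintro rfl; exact lt_irrefl _ haz)
  obtain ⟨I, P₂, rfl⟩ := append_of_mem hz'
  have hIz : ∀ x ∈ I, f x < f z := fun x hx =>
    (pairwise_append.1 (pairwise_cons.1 hP').2).2.2 x hx z mem_cons_self
  refine ⟨P₁, I, P₂, rfl, ?_, fun x hx => ⟨(pairwise_cons.1 hP').1 x (by simp [hx]), hIz x hx⟩⟩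
  have hP₁ne : ∀ x ∈ P₁, decide (x ≠ a) = true := fun x hx => by
    simpa using ne_of_apply_ne f (hP₁a x hx a mem_cons_self).ne
  have hIne : ∀ x ∈ I, decide (x ≠ z) = true := fun x hx => by
    simpa using ne_of_apply_ne f (hIz x hx).ne
  have haz' : a ≠ z := ne_of_apply_ne f haz.ne
  rw [segment, dropWhile_append_of_pos hP₁ne, dropWhile_cons_of_neg (by simp),
    takeWhile_cons_of_pos (by simpa using haz'), takeWhile_append_of_pos hIne,
    takeWhile_cons_of_neg (by simp), cons_append, append_nil]

theorem getLast?_segment (P : List α) (a z : α) : (segment P a z).getLast? = some z := by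
  simp [segment]

section Sorted

variable (hP : P.Pairwise (f · < f ·)) (ha : a ∈ P) (hz : z ∈ P) (haz : f a < f z)
include hP ha hz haz

theorem segment_infix : segment P a z <:+: P := by
  obtain ⟨P₁, I, P₂, hPeq, hseg, -⟩ := exists_segment_eq hP ha hz haz
  exact ⟨P₁, P₂, by rw [hseg, hPeq]; simp⟩

theorem head?_segment : (segment P a z).head? = some a := by
  obtain ⟨_, _, _, _, hseg, _⟩ := exists_segment_eq hP ha hz haz
  rw [hseg, head?_cons]

theorem eq_or_eq_or_between_of_mem_segment (hv : v ∈ segment P a z) :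
    v = a ∨ v = z ∨ f a < f v ∧ f v < f z := by
  obtain ⟨_, I, _, _, hseg, hI⟩ := exists_segment_eq hP ha hz haz
  rw [hseg, mem_cons, mem_append, mem_singleton] at hv
  rcases hv with hv | hv | hv
  exacts [Or.inl hv, Or.inr (Or.inr (hI v hv)), Or.inr (Or.inl hv)]

end Sorted

section Blocks

variable (hP : P.Pairwise (f · < f ·)) (hC : C.Pairwise (f · < f ·))
  (hCPQ : ∀ v, v ∈ C ↔ v ∈ P ∧ v ∈ Q) (hb : (a, z) ∈ edgesOf C)
include hP hC hCPQ hb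

theorem segment_infix_of_mem_edgesOf : segment P a z <:+: P :=
  have h := endpoints_mem_of_mem_edgesOf hCPQ hb
  segment_infix hP h.1 h.2 (hC.rel_of_mem_edgesOf hb)

theorem head?_segment_of_mem_edgesOf : (segment P a z).head? = some a :=
  have h := endpoints_mem_of_mem_edgesOf hCPQ hb
  head?_segment hP h.1 h.2 (hC.rel_of_mem_edgesOf hb)

theorem between_of_mem_segment_of_not_mem (hv : v ∈ segment P a z) (hvQ : v ∉ Q) :
    f a < f v ∧ f v < f z := by
  have ha := (hCPQ a).1 (fst_mem_of_mem_edgesOf hb)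
  have hz := (hCPQ z).1 (snd_mem_of_mem_edgesOf hb)
  rcases eq_or_eq_or_between_of_mem_segment hP ha.1 hz.1 (hC.rel_of_mem_edgesOf hb) hv
    with rfl | rfl | h
  exacts [absurd ha.2 hvQ, absurd hz.2 hvQ, h]

theorem not_mem_of_mem_segment (hv : v ∈ segment P a z) (hva : v ≠ a) (hvz : v ≠ z) :
    v ∉ Q := fun hvQ => by
  have h := endpoints_mem_of_mem_edgesOf hCPQ hb
  have hvP := (segment_infix_of_mem_edgesOf hP hC hCPQ hb).subset hv
  refine not_between_of_mem_edgesOf hC hb ((hCPQ v).2 ⟨hvP, hvQ⟩) ?_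
  simpa [hva, hvz] using
    eq_or_eq_or_between_of_mem_segment hP h.1 h.2 (hC.rel_of_mem_edgesOf hb) hv

theorem fst_eq_or_not_mem_of_mem_edgesOf_segment (he : (u, w) ∈ edgesOf (segment P a z)) :
    u = a ∨ u ∉ Q := by
  have h := endpoints_mem_of_mem_edgesOf hCPQ hb
  have haz := hC.rel_of_mem_edgesOf hb
  have huw : f u < f w :=
    hP.rel_of_mem_edgesOf (mem_edgesOf_of_infix (segment_infix hP h.1 h.2 haz) he)
  have hwz : f w ≤ f z := by
    rcases eq_or_eq_or_between_of_mem_segment hP h.1 h.2 haz (snd_mem_of_mem_edgesOf he)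
      with rfl | rfl | h
    exacts [haz.le, le_rfl, h.2.le]
  by_cases hua : u = a
  · exact Or.inl hua
  · exact Or.inr (not_mem_of_mem_segment hP hC hCPQ hb (fst_mem_of_mem_edgesOf he) hua
      (by rintro rfl; exact lt_irrefl _ (huw.trans_le hwz)))

theorem eq_of_mem_segment_of_not_mem (hb' : (a', z') ∈ edgesOf C) (hv : v ∈ segment P a z)
    (hv' : v ∈ segment P a' z') (hvQ : v ∉ Q) : a = a' ∧ z = z' := by
  have h := between_of_mem_segment_of_not_mem hP hC hCPQ hb hv hvQ
  have h' := between_of_mem_segment_of_not_mem hP hC hCPQ hb' hv' hvQ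
  have ha := fst_mem_of_mem_edgesOf hb
  have ha' := fst_mem_of_mem_edgesOf hb'
  rcases lt_trichotomy (f a) (f a') with hlt | heq | hlt
  · exact absurd ⟨hlt, h'.1.trans h.2⟩ (not_between_of_mem_edgesOf hC hb ha')
  · obtain rfl := inj_on_of_nodup_map (pairwise_map.2 (hC.imp ne_of_lt)) ha ha' heq
    exact ⟨rfl, snd_eq_of_mem_edgesOf (hC.imp (ne_of_apply_ne f ·.ne)) hb hb'⟩
  · exact absurd ⟨hlt, h.1.trans h'.2⟩ (not_between_of_mem_edgesOf hC hb' ha)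

end Blocks

end Segments

section Glue

variable {α : Type}

def glue (seg : α → α → List α) : List α → List α
  | [] => []
  | [c] => [c]
  | c :: c' :: cs => (seg c c').dropLast ++ glue seg (c' :: cs)

theorem glue_spec {seg : α → α → List α} : ∀ {cs : List α}, cs ≠ [] →
    (∀ a z, (a, z) ∈ edgesOf cs → (seg a z).head? = some a ∧ (seg a z).getLast? = some z) →
    (glue seg cs).head? = cs.head? ∧ (glue seg cs).getLast? = cs.getLast? ∧
      ∀ u v, (u, v) ∈ edgesOf (glue seg cs) →
        ∃ a z, (a, z) ∈ edgesOf cs ∧ (u, v) ∈ edgesOf (seg a z)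
  | [], h, _ => absurd rfl h
  | [c], _, _ => by simp [glue, edgesOf]
  | c :: c' :: cs, _, hseg => by
    obtain ⟨ih_head, ih_last, ih_edges⟩ :=
      glue_spec (cons_ne_nil c' cs) fun a z h => hseg a z (by simp [h])
    obtain ⟨hhead, hlast⟩ := hseg c c' (by simp)
    obtain ⟨X, hX⟩ := getLast?_eq_some_iff.1 hlast
    obtain ⟨Y, hY⟩ := head?_eq_some_iff.1 ih_head
    have hglue : glue seg (c :: c' :: cs) = X ++ c' :: Y := by
      rw [glue, hX, hY, dropLast_concat]
    refine ⟨?_, ?_, fun u v he => ?_⟩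
    · rw [hglue, head?_cons, ← hhead, hX]
      simp
    · rw [hglue, getLast?_append_cons, ← hY, ih_last, getLast?_cons_cons]
    · rw [hglue, edgesOf_append_cons, mem_append, ← hX, ← hY] at he
      rcases he with he | he
      · exact ⟨c, c', by simp, he⟩
      · obtain ⟨a, z, hb, he⟩ := ih_edges u v he
        exact ⟨a, z, by simp [hb], he⟩

end Glue

section Rank

variable {α : Type*} {r : α → α → Prop}

noncomputable def reachCount (r : α → α → Prop) (a : α) : ℕ := {b | TransGen r a b}.ncard

theorem reachCount_lt_of_rel {a b : α} (hfin : {c | TransGen r a c}.Finite)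
    (hb : ¬ TransGen r b b) (hab : r a b) : reachCount r b < reachCount r a := by
  refine Set.ncard_lt_ncard ⟨fun c hc => TransGen.head hab hc, fun hsub => hb ?_⟩ hfin
  exact hsub (TransGen.single hab)

end Rank

namespace UFN

section Pairs

variable {V : Type} [DecidableEq V] {k : ℕ} (G : UFN V k) {U : Set (V × Fin k)}
  {R : V × Fin k → ℕ} {i : Fin k} {b : Blk V k} {u v w : V}

theorem mem_commons : v ∈ G.commons i ↔ v ∈ G.old i ∧ v ∈ G.new i := by
  simp [commons]

theorem exists_sorted (hWF : G.WellFormed) (i : Fin k) : ∃ f : V → ℕ,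
    (G.old i).Pairwise (f · < f ·) ∧ (G.new i).Pairwise (f · < f ·) ∧
      (G.commons i).Pairwise (f · < f ·) := by
  obtain ⟨f, hf⟩ := hWF.2.1 i
  have hold := pairwise_of_forall_mem_edgesOf fun u v h => hf (u, v) (mem_append_left _ h)
  exact ⟨f, hold, pairwise_of_forall_mem_edgesOf fun u v h => hf (u, v) (mem_append_right _ h),
    hold.sublist filter_sublist⟩

theorem head?_commons (hWF : G.WellFormed) (i : Fin k) : (G.commons i).head? = some G.s := by
  have hs : G.s ∈ G.new i := mem_of_head? (hWF.1 i).2.1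
  obtain ⟨O, hO⟩ := head?_eq_some_iff.1 (hWF.1 i).1.1
  simp [commons, hO, hs]

theorem getLast?_commons (hWF : G.WellFormed) (i : Fin k) :
    (G.commons i).getLast? = some G.t := by
  have ht : G.t ∈ G.new i := mem_of_getLast? (hWF.1 i).2.2.1
  obtain ⟨O, hO⟩ := getLast?_eq_some_iff.1 (hWF.1 i).1.2.1
  simp [commons, hO, ht]

section Blocks

variable (hWF : G.WellFormed) (hb : G.IsBlk b)
include hWF hb

theorem blkOldSeg_infix : G.blkOldSeg b <:+: G.old b.1 := by
  obtain ⟨f, hO, -, hC⟩ := G.exists_sorted hWF b.1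
  exact segment_infix_of_mem_edgesOf hO hC (fun _ => G.mem_commons) hb

theorem blkNewSeg_infix : G.blkNewSeg b <:+: G.new b.1 := by
  obtain ⟨f, -, hN, hC⟩ := G.exists_sorted hWF b.1
  exact segment_infix_of_mem_edgesOf hN hC (fun _ => G.mem_commons.trans and_comm) hb

theorem head?_blkOldSeg : (G.blkOldSeg b).head? = some b.2.1 := by
  obtain ⟨f, hO, -, hC⟩ := G.exists_sorted hWF b.1
  exact head?_segment_of_mem_edgesOf hO hC (fun _ => G.mem_commons) hb

theorem head?_blkNewSeg : (G.blkNewSeg b).head? = some b.2.1 := by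
  obtain ⟨f, -, hN, hC⟩ := G.exists_sorted hWF b.1
  exact head?_segment_of_mem_edgesOf hN hC (fun _ => G.mem_commons.trans and_comm) hb

theorem fst_eq_or_not_mem_new_of_mem_edgesOf_blkOldSeg (he : (u, w) ∈ edgesOf (G.blkOldSeg b)) :
    u = b.2.1 ∨ u ∉ G.new b.1 := by
  obtain ⟨f, hO, -, hC⟩ := G.exists_sorted hWF b.1
  exact fst_eq_or_not_mem_of_mem_edgesOf_segment hO hC (fun _ => G.mem_commons) hb he

theorem fst_eq_or_not_mem_old_of_mem_edgesOf_blkNewSeg (he : (u, w) ∈ edgesOf (G.blkNewSeg b)) :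
    u = b.2.1 ∨ u ∉ G.old b.1 := by
  obtain ⟨f, -, hN, hC⟩ := G.exists_sorted hWF b.1
  exact fst_eq_or_not_mem_of_mem_edgesOf_segment hN hC (fun _ => G.mem_commons.trans and_comm)
    hb he

theorem not_mem_old_of_mem_blkNewSeg (hv : v ∈ G.blkNewSeg b) (hva : v ≠ b.2.1)
    (hvz : v ≠ b.2.2) : v ∉ G.old b.1 := by
  obtain ⟨f, -, hN, hC⟩ := G.exists_sorted hWF b.1
  exact not_mem_of_mem_segment hN hC (fun _ => G.mem_commons.trans and_comm) hb hv hva hvz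

end Blocks

theorem eq_of_mem_blkOldSeg_of_not_mem_new (hWF : G.WellFormed) {c c' : V × V}
    (hb : G.IsBlk (i, c)) (hb' : G.IsBlk (i, c')) (hv : v ∈ G.blkOldSeg (i, c))
    (hv' : v ∈ G.blkOldSeg (i, c')) (hvN : v ∉ G.new i) : c = c' := by
  obtain ⟨f, hO, -, hC⟩ := G.exists_sorted hWF i
  obtain ⟨h₁, h₂⟩ := eq_of_mem_segment_of_not_mem hO hC (fun _ => G.mem_commons) hb hb' hv hv' hvN
  exact Prod.ext h₁ h₂

theorem eq_of_mem_blkNewSeg_of_not_mem_old (hWF : G.WellFormed) {c c' : V × V}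
    (hb : G.IsBlk (i, c)) (hb' : G.IsBlk (i, c')) (hv : v ∈ G.blkNewSeg (i, c))
    (hv' : v ∈ G.blkNewSeg (i, c')) (hvO : v ∉ G.old i) : c = c' := by
  obtain ⟨f, -, hN, hC⟩ := G.exists_sorted hWF i
  obtain ⟨h₁, h₂⟩ := eq_of_mem_segment_of_not_mem hN hC (fun _ => G.mem_commons.trans and_comm)
    hb hb' hv hv' hvO
  exact Prod.ext h₁ h₂

theorem demand_le_cap_of_mem_old (hWF : G.WellFormed) (h : (u, v) ∈ edgesOf (G.old i)) :
    G.demand i ≤ G.cap u v := by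
  refine le_trans ?_ (hWF.2.2.2.1 u v)
  simpa [h] using Finset.single_le_sum (fun j _ => Nat.zero_le
    (if (u, v) ∈ edgesOf (G.old j) then G.demand j else 0)) (Finset.mem_univ i)

theorem demand_le_cap_of_mem_new (hWF : G.WellFormed) (h : (u, v) ∈ edgesOf (G.new i)) :
    G.demand i ≤ G.cap u v := by
  refine le_trans ?_ (hWF.2.2.2.2 u v)
  simpa [h] using Finset.single_le_sum (fun j _ => Nat.zero_le
    (if (u, v) ∈ edgesOf (G.new j) then G.demand j else 0)) (Finset.mem_univ i)

theorem demand_le_cap_of_active (hWF : G.WellFormed) (h : G.active U i (u, v)) :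
    G.demand i ≤ G.cap u v :=
  h.elim (fun h => G.demand_le_cap_of_mem_old hWF h.1) (fun h => G.demand_le_cap_of_mem_new hWF h.1)

theorem active_functional (hWF : G.WellFormed) (hv : G.active U i (u, v))
    (hw : G.active U i (u, w)) : v = w := by
  rcases hv with ⟨hv, hu⟩ | ⟨hv, hu⟩ <;> rcases hw with ⟨hw, hu'⟩ | ⟨hw, hu'⟩
  · exact snd_eq_of_mem_edgesOf (hWF.1 i).1.2.2 hv hw
  · exact absurd hu' hu
  · exact absurd hu hu'
  · exact snd_eq_of_mem_edgesOf (hWF.1 i).2.2.2 hv hw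

open Classical in
noncomputable def chosenSeg (U : Set (V × Fin k)) (b : Blk V k) : List V :=
  if (b.2.1, b.1) ∈ U then G.blkNewSeg b else G.blkOldSeg b

def BlockConsistent (U : Set (V × Fin k)) : Prop :=
  ∀ b, G.IsBlk b →
    ((b.2.1, b.1) ∈ U → ∀ v ∈ G.blkNewSeg b, v ∉ G.old b.1 → (v, b.1) ∈ U) ∧
    ((b.2.1, b.1) ∉ U → ∀ v ∈ G.blkOldSeg b, v ∉ G.new b.1 → (v, b.1) ∉ U)

theorem head?_chosenSeg (hWF : G.WellFormed) (hb : G.IsBlk b) :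
    (G.chosenSeg U b).head? = some b.2.1 := by
  unfold chosenSeg
  split_ifs
  exacts [G.head?_blkNewSeg hWF hb, G.head?_blkOldSeg hWF hb]

theorem getLast?_chosenSeg : (G.chosenSeg U b).getLast? = some b.2.2 := by
  unfold chosenSeg blkNewSeg blkOldSeg
  split_ifs <;> exact getLast?_segment _ _ _

theorem active_of_mem_edgesOf_chosenSeg (hWF : G.WellFormed) (hU : G.BlockConsistent U)
    (hb : G.IsBlk b) (he : (u, w) ∈ edgesOf (G.chosenSeg U b)) : G.active U b.1 (u, w) := by
  unfold chosenSeg at he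
  split_ifs at he with hs
  · refine Or.inr ⟨mem_edgesOf_of_infix (G.blkNewSeg_infix hWF hb) he, ?_⟩
    rcases G.fst_eq_or_not_mem_old_of_mem_edgesOf_blkNewSeg hWF hb he with rfl | hu
    exacts [hs, (hU b hb).1 hs u (fst_mem_of_mem_edgesOf he) hu]
  · refine Or.inl ⟨mem_edgesOf_of_infix (G.blkOldSeg_infix hWF hb) he, ?_⟩
    rcases G.fst_eq_or_not_mem_new_of_mem_edgesOf_blkOldSeg hWF hb he with rfl | hu
    exacts [hs, (hU b hb).2 hs u (fst_mem_of_mem_edgesOf he) hu]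

noncomputable def transientPath (U : Set (V × Fin k)) (i : Fin k) : List V :=
  glue (fun a z => G.chosenSeg U (i, a, z)) (G.commons i)

theorem transientPath_spec (hWF : G.WellFormed) (U : Set (V × Fin k)) (i : Fin k) :
    (G.transientPath U i).head? = some G.s ∧ (G.transientPath U i).getLast? = some G.t ∧
      ∀ u v, (u, v) ∈ edgesOf (G.transientPath U i) →
        ∃ a z, G.IsBlk (i, a, z) ∧ (u, v) ∈ edgesOf (G.chosenSeg U (i, a, z)) := by
  have hne : G.commons i ≠ [] := by simp [← head?_eq_none_iff, G.head?_commons hWF]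
  obtain ⟨hs, ht, hedges⟩ := glue_spec hne fun a z hb =>
    ⟨G.head?_chosenSeg hWF (b := (i, a, z)) hb, G.getLast?_chosenSeg⟩
  exact ⟨hs.trans (G.head?_commons hWF i), ht.trans (G.getLast?_commons hWF i), hedges⟩

theorem transientPair (hWF : G.WellFormed) (hU : G.BlockConsistent U) (i : Fin k) :
    G.TransientPair U i (G.transientPath U i) := by
  obtain ⟨hs, ht, hedges⟩ := G.transientPath_spec hWF U i
  have hact : ∀ u v, (u, v) ∈ edgesOf (G.transientPath U i) → G.active U i (u, v) :=
    fun u v he => by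
      obtain ⟨a, z, hb, he⟩ := hedges u v he
      exact G.active_of_mem_edgesOf_chosenSeg hWF hU hb he
  obtain ⟨f, hf⟩ := hWF.2.1 i
  have hmono : ∀ u v, (u, v) ∈ edgesOf (G.transientPath U i) → f u < f v := fun u v he =>
    (hact u v he).elim (fun h => hf _ (mem_append_left _ h.1))
      (fun h => hf _ (mem_append_right _ h.1))
  have hpath : IsPathIn (G.active U i) G.s G.t (G.transientPath U i) :=
    ⟨hs, ht, isChain_iff_forall_mem_edgesOf.2 hact,
      (pairwise_of_forall_mem_edgesOf hmono).imp (ne_of_apply_ne f ·.ne)⟩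
  exact ⟨hpath, fun e he => G.demand_le_cap_of_active hWF (hact e.1 e.2 he),
    fun p hp _ => hp.unique (fun _ _ _ => G.active_functional hWF) hpath⟩

theorem blockConsistent_of_blockPattern (hpat : G.BlockPattern R)
    (hU : ∀ x y, R x < R y → y ∈ U → x ∈ U) : G.BlockConsistent U := by
  intro b hb
  obtain ⟨r, hnew, hstart, hold⟩ := hpat b hb
  have hb' : (b.2.1, b.2.2) ∈ edgesOf (G.commons b.1) := hb
  have ha := G.mem_commons.1 (fst_mem_of_mem_edgesOf hb')
  have hz := G.mem_commons.1 (snd_mem_of_mem_edgesOf hb')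
  refine ⟨fun hs v hv hvO => hU _ _ ?_ hs, fun hs v hv hvN hvU => hs (hU _ _ ?_ hvU)⟩
  · rw [hnew v hv (by rintro rfl; exact hvO ha.1) (by rintro rfl; exact hvO hz.1), hstart]
    omega
  · rw [hold v hv hvN, hstart]
    omega

theorem demand_add_le_cap_of_dep_order
    (hdep : ∀ b₁ b₂, G.Dep b₁ b₂ → R (b₂.2.1, b₂.1) < R (b₁.2.1, b₁.1))
    (hU : ∀ x y, R x < R y → y ∈ U → x ∈ U) {b b' : Blk V k} (hb : G.IsBlk b)
    (hb' : G.IsBlk b') (hi : b.1 ≠ b'.1) (hs : (b.2.1, b.1) ∈ U) (hs' : (b'.2.1, b'.1) ∉ U)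
    (he : (u, v) ∈ edgesOf (G.blkNewSeg b)) (he' : (u, v) ∈ edgesOf (G.blkOldSeg b')) :
    G.demand b.1 + G.demand b'.1 ≤ G.cap u v := by
  by_contra hlt
  exact hs' (hU _ _ (hdep b b' ⟨hb, hb', hi, (u, v), he, he', not_le.1 hlt⟩) hs)

end Pairs

section GreedySchedule

variable {V : Type} [DecidableEq V] {k : ℕ} (G : UFN V k) {b : Blk V k} {v : V}

/- Updates that are neither the start nor an interior vertex of a block never change the active
edges; they go to round `0`. -/
open Classical in
noncomputable def greedySchedule (u : V × Fin k) : ℕ :=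
  if h : ∃ z, G.IsBlk (u.2, u.1, z) then 3 * reachCount G.Dep (u.2, u.1, h.choose) + 2
  else if h : ∃ c, G.IsBlk (u.2, c) ∧ u.1 ∈ G.blkNewSeg (u.2, c) ∧ u.1 ∉ G.old u.2 then
    3 * reachCount G.Dep (u.2, h.choose) + 1
  else if h : ∃ c, G.IsBlk (u.2, c) ∧ u.1 ∈ G.blkOldSeg (u.2, c) ∧ u.1 ∉ G.new u.2 then
    3 * reachCount G.Dep (u.2, h.choose) + 3
  else 0

theorem finite_isBlk : {b : Blk V k | G.IsBlk b}.Finite :=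
  (Set.finite_univ.prod (Set.finite_iUnion fun i => (edgesOf (G.commons i)).finite_toSet)).subset
    fun b hb => ⟨trivial, Set.mem_iUnion.2 ⟨b.1, hb⟩⟩

variable (hWF : G.WellFormed)
include hWF

theorem greedySchedule_start (hb : G.IsBlk b) :
    G.greedySchedule (b.2.1, b.1) = 3 * reachCount G.Dep b + 2 := by
  have h : ∃ z, G.IsBlk (b.1, b.2.1, z) := ⟨b.2.2, hb⟩
  have hnd : (G.commons b.1).Nodup := (hWF.1 b.1).1.2.2.sublist filter_sublist
  rw [greedySchedule, dif_pos h, snd_eq_of_mem_edgesOf hnd h.choose_spec hb]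

theorem greedySchedule_of_mem_blkNewSeg (hb : G.IsBlk b) (hv : v ∈ G.blkNewSeg b)
    (hvO : v ∉ G.old b.1) : G.greedySchedule (v, b.1) = 3 * reachCount G.Dep b + 1 := by
  have hstart : ¬ ∃ z, G.IsBlk (b.1, v, z) := fun ⟨_, hz⟩ =>
    hvO (G.mem_commons.1 (fst_mem_of_mem_edgesOf hz)).1
  have h : ∃ c, G.IsBlk (b.1, c) ∧ v ∈ G.blkNewSeg (b.1, c) ∧ v ∉ G.old b.1 := ⟨b.2, hb, hv, hvO⟩
  rw [greedySchedule, dif_neg hstart, dif_pos h,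
    G.eq_of_mem_blkNewSeg_of_not_mem_old hWF h.choose_spec.1 hb h.choose_spec.2.1 hv hvO]

theorem greedySchedule_of_mem_blkOldSeg (hb : G.IsBlk b) (hv : v ∈ G.blkOldSeg b)
    (hvN : v ∉ G.new b.1) : G.greedySchedule (v, b.1) = 3 * reachCount G.Dep b + 3 := by
  have hstart : ¬ ∃ z, G.IsBlk (b.1, v, z) := fun ⟨_, hz⟩ =>
    hvN (G.mem_commons.1 (fst_mem_of_mem_edgesOf hz)).2
  have hnew : ¬ ∃ c, G.IsBlk (b.1, c) ∧ v ∈ G.blkNewSeg (b.1, c) ∧ v ∉ G.old b.1 :=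
    fun ⟨_, hc, hvc, _⟩ => hvN ((G.blkNewSeg_infix hWF hc).subset hvc)
  have h : ∃ c, G.IsBlk (b.1, c) ∧ v ∈ G.blkOldSeg (b.1, c) ∧ v ∉ G.new b.1 := ⟨b.2, hb, hv, hvN⟩
  rw [greedySchedule, dif_neg hstart, dif_neg hnew, dif_pos h,
    G.eq_of_mem_blkOldSeg_of_not_mem_new hWF h.choose_spec.1 hb h.choose_spec.2.1 hv hvN]

theorem greedySchedule_blockPattern : G.BlockPattern G.greedySchedule := fun b hb =>
  ⟨3 * reachCount G.Dep b + 1,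
    fun _ hv hva hvz => G.greedySchedule_of_mem_blkNewSeg hWF hb hv
      (G.not_mem_old_of_mem_blkNewSeg hWF hb hv hva hvz),
    G.greedySchedule_start hWF hb,
    fun _ hv hvN => G.greedySchedule_of_mem_blkOldSeg hWF hb hv hvN⟩

theorem greedySchedule_lt_of_dep (hacyc : ¬ G.HasDepCycle) {b₁ b₂ : Blk V k}
    (h : G.Dep b₁ b₂) : G.greedySchedule (b₂.2.1, b₂.1) < G.greedySchedule (b₁.2.1, b₁.1) := by
  have hfin : {c | TransGen G.Dep b₁ c}.Finite := G.finite_isBlk.subset fun c hc =>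
    (TransGen.tail'_iff.1 hc).choose_spec.2.2.1
  have := reachCount_lt_of_rel hfin (fun hc => hacyc ⟨b₂, hc⟩) h
  rw [G.greedySchedule_start hWF h.1, G.greedySchedule_start hWF h.2.1]
  omega

end GreedySchedule

section TwoPairs

variable {V : Type} [DecidableEq V] (G : UFN V 2) {U : Set (V × Fin 2)} {R : V × Fin 2 → ℕ}
  {u v : V}

theorem demand_add_le_cap_of_mem_transientPath (hWF : G.WellFormed)
    (hdep : ∀ b₁ b₂, G.Dep b₁ b₂ → R (b₂.2.1, b₂.1) < R (b₁.2.1, b₁.1))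
    (hU : ∀ x y, R x < R y → y ∈ U → x ∈ U) (h₀ : (u, v) ∈ edgesOf (G.transientPath U 0))
    (h₁ : (u, v) ∈ edgesOf (G.transientPath U 1)) : G.demand 0 + G.demand 1 ≤ G.cap u v := by
  obtain ⟨a₀, z₀, hb₀, he₀⟩ := (G.transientPath_spec hWF U 0).2.2 u v h₀
  obtain ⟨a₁, z₁, hb₁, he₁⟩ := (G.transientPath_spec hWF U 1).2.2 u v h₁
  unfold chosenSeg at he₀ he₁
  split_ifs at he₀ he₁ with hs₀ hs₁ hs₁
  · have hcap := hWF.2.2.2.2 u v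
    simpa [Fin.sum_univ_two, mem_edgesOf_of_infix (G.blkNewSeg_infix hWF hb₀) he₀,
      mem_edgesOf_of_infix (G.blkNewSeg_infix hWF hb₁) he₁] using hcap
  · exact G.demand_add_le_cap_of_dep_order hdep hU hb₀ hb₁ zero_ne_one hs₀ hs₁ he₀ he₁
  · exact add_comm (G.demand 1) _ ▸
      G.demand_add_le_cap_of_dep_order hdep hU hb₁ hb₀ one_ne_zero hs₁ hs₀ he₁ he₀
  · have hcap := hWF.2.2.2.1 u v
    simpa [Fin.sum_univ_two, mem_edgesOf_of_infix (G.blkOldSeg_infix hWF hb₀) he₀,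
      mem_edgesOf_of_infix (G.blkOldSeg_infix hWF hb₁) he₁] using hcap

theorem transientFamily (hWF : G.WellFormed) (hpat : G.BlockPattern R)
    (hdep : ∀ b₁ b₂, G.Dep b₁ b₂ → R (b₂.2.1, b₂.1) < R (b₁.2.1, b₁.1))
    (hU : ∀ x y, R x < R y → y ∈ U → x ∈ U) : G.TransientFamily U := by
  have hpair := G.transientPair hWF (G.blockConsistent_of_blockPattern hpat hU)
  refine ⟨G.transientPath U, hpair, fun u v => ?_⟩
  rw [Fin.sum_univ_two]
  by_cases h₀ : (u, v) ∈ edgesOf (G.transientPath U 0) <;>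
    by_cases h₁ : (u, v) ∈ edgesOf (G.transientPath U 1) <;> simp only [h₀, h₁, if_true, if_false]
  · exact G.demand_add_le_cap_of_mem_transientPath hWF hdep hU h₀ h₁
  · simpa using (hpair 0).2.1 _ h₀
  · simpa using (hpair 1).2.1 _ h₁
  · exact Nat.zero_le _

theorem feasible_of_blockPattern (hWF : G.WellFormed) (hpat : G.BlockPattern R)
    (hdep : ∀ b₁ b₂, G.Dep b₁ b₂ → R (b₂.2.1, b₂.1) < R (b₁.2.1, b₁.1)) : G.Feasible R :=
  fun _ _ hS => G.transientFamily hWF hpat hdep fun _ y hxy hy =>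
    Or.inl (hxy.trans_le (hy.elim (fun hy => le_of_lt hy) fun hy => (hS y hy).le))

end TwoPairs

end UFN

end FlowUpdate

open FlowUpdate in
/-- If the dependency graph is acyclic, the greedy schedule that
repeatedly updates all blocks corresponding to current sinks of the dependency
graph (each block over three consecutive rounds: preparation, start-vertex
update, cleanup) terminates and yields a feasible update sequence. -/
theorem stmt6 {V : Type} [DecidableEq V] (G : UFN V 2)
    (hWF : G.WellFormed) (hacyc : ¬ G.HasDepCycle) :
    ∃ R : V × Fin 2 → ℕ, G.Feasible R ∧ G.BlockPattern R ∧
      ∀ b1 b2 : UFN.Blk V 2, G.Dep b1 b2 → R (b2.2.1, b2.1) < R (b1.2.1, b1.1) :=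
  ⟨G.greedySchedule, G.feasible_of_blockPattern hWF (G.greedySchedule_blockPattern hWF)
      fun _ _ => G.greedySchedule_lt_of_dep hWF hacyc,
    G.greedySchedule_blockPattern hWF, fun _ _ => G.greedySchedule_lt_of_dep hWF hacyc⟩
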